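/- arXiv:2508.04876 — 4 statements merged into one kernel-verified Lean document; each statement's English description precedes it below -/
import Mathlib

section
/- In the root system of type Bₙ (n ≥ 3) with fundamental coweights ω₁^∨, …, ωₙ^∨, for every odd m with 3 ≤ m ≤ n there is a covering relation (minimal degeneration) ω_{m-2}^∨ < ω_m^∨ in the dominance order on the coweight lattice: ω_m^∨ - ω_{m-2}^∨ is a sum of simple coroots α_j^∨ for j ∈ {m-1, …, n}, and no dominant coweight lies strictly between them. -/
/-- The simple coroots of type `Bₙ` in `ℤⁿ`: `αᵢ^∨ = eᵢ - eᵢ₊₁` for `i < n` and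
`αₙ^∨ = 2eₙ` (indices `i : Fin n` are 0-based). -/
def Bcoroot (n : ℕ) (i : Fin n) : Fin n → ℤ :=
  fun j => if i.val = n - 1 then (if j = i then 2 else 0)
    else if j.val = i.val then 1 else if j.val = i.val + 1 then -1 else 0

/-- The fundamental coweight `ωₘ^∨ = e₁ + ⋯ + eₘ` of type `Bₙ`. -/
def Bomega (n m : ℕ) : Fin n → ℤ := fun j => if j.val < m then 1 else 0

/-- Dominance order: `μ - λ` is a nonnegative integer combination of simple coroots. -/
def BdomLE (n : ℕ) (lam mu : Fin n → ℤ) : Prop :=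
  ∃ c : Fin n → ℕ, mu - lam = ∑ i, (c i : ℤ) • Bcoroot n i

/-- Dominant coweights of type `Bₙ`: weakly decreasing with nonnegative entries. -/
def Bdominant (n : ℕ) (mu : Fin n → ℤ) : Prop :=
  Antitone mu ∧ ∀ j, 0 ≤ mu j

/-- Picking out the unique index with a given value. -/
lemma sum_pick {n : ℕ} (f : Fin n → ℤ) {t : ℕ} (ht : t < n) :
    ∑ i : Fin n, (if i.val = t then f i else 0) = f ⟨t, ht⟩ := by
  have : ∀ i : Fin n, (if i.val = t then f i else 0)
      = (if i = (⟨t, ht⟩ : Fin n) then f (⟨t, ht⟩ : Fin n) else 0) := by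
    intro i
    by_cases h : i.val = t
    · have : i = (⟨t, ht⟩ : Fin n) := Fin.ext h
      simp [this]
    · have : i ≠ (⟨t, ht⟩ : Fin n) := by
        intro hh; exact h (by rw [hh])
      simp [h, this]
  rw [Finset.sum_congr rfl fun i _ => this i, Finset.sum_ite_eq']
  simp

/-- Evaluation of a linear combination of coroots at coordinate `j`. -/
lemma sumCoroot {n : ℕ} (c : Fin n → ℤ) (j : Fin n) :
    ∑ i, c i * Bcoroot n i j =
      (if j.val = n - 1 then 2 * c j else c j)
        - ∑ i : Fin n, (if i.val + 1 = j.val then c i else 0) := by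
  have key : ∀ i : Fin n, c i * Bcoroot n i j =
      (if i = j then (if j.val = n - 1 then 2 * c j else c j) else 0)
        - (if i.val + 1 = j.val then c i else 0) := by
    intro i
    by_cases h2 : i = j
    · subst h2
      have hni : ¬ (i.val + 1 = i.val) := by omega
      unfold Bcoroot
      by_cases h1 : i.val = n - 1
      · simp [h1, hni]; ring
      · simp [h1, hni]
    · have hne : i.val ≠ j.val := fun h => h2 (Fin.ext h)
      have hne' : j ≠ i := fun h => h2 h.symm
      unfold Bcoroot
      by_cases h1 : i.val = n - 1
      · have hj := j.isLt
        rw [if_pos h1, if_neg hne', if_neg h2,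
          if_neg (show ¬ (i.val + 1 = j.val) by omega)]
        ring
      · rw [if_neg h1, if_neg (Ne.symm hne), if_neg h2]
        by_cases h3 : j.val = i.val + 1
        · rw [if_pos h3, if_pos h3.symm]; ring
        · rw [if_neg h3, if_neg (fun hh => h3 hh.symm)]; ring
  rw [Finset.sum_congr rfl fun i _ => key i, Finset.sum_sub_distrib,
    Finset.sum_ite_eq' Finset.univ j]
  simp

/-- The "previous coefficient" sum evaluates to `c (j-1)` (or `0` if `j = 0`). -/
lemma sum_pick_pred {n : ℕ} (c : Fin n → ℤ) (j : Fin n) :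
    ∑ i : Fin n, (if i.val + 1 = j.val then c i else 0)
      = if h : 0 < j.val then c ⟨j.val - 1, by have := j.isLt; omega⟩ else 0 := by
  by_cases h : 0 < j.val
  · rw [dif_pos h]
    have hlt : j.val - 1 < n := by have := j.isLt; omega
    have : ∀ i : Fin n, (if i.val + 1 = j.val then c i else 0)
        = (if i.val = j.val - 1 then c i else 0) := by
      intro i
      exact if_congr (by omega) rfl rfl
    rw [Finset.sum_congr rfl fun i _ => this i, sum_pick c hlt]
  · rw [dif_neg h]
    exact Finset.sum_eq_zero fun i _ => if_neg (by omega)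

/-- The sum of the coordinates of a coroot. -/
lemma sum_coords_coroot {n : ℕ} (i : Fin n) :
    ∑ j, Bcoroot n i j = if i.val = n - 1 then 2 else 0 := by
  by_cases h1 : i.val = n - 1
  · rw [if_pos h1]
    have : ∀ j : Fin n, Bcoroot n i j = if j = i then 2 else 0 := by
      intro j; unfold Bcoroot; rw [if_pos h1]
    rw [Finset.sum_congr rfl fun j _ => this j, Finset.sum_ite_eq' Finset.univ i]
    simp
  · rw [if_neg h1]
    have hi : i.val + 1 < n := by have := i.isLt; omega
    have : ∀ j : Fin n, Bcoroot n i j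
        = (if j.val = i.val then (1:ℤ) else 0) + (if j.val = i.val + 1 then (-1:ℤ) else 0) := by
      intro j; unfold Bcoroot
      rw [if_neg h1]
      split_ifs <;> omega
    rw [Finset.sum_congr rfl fun j _ => this j, Finset.sum_add_distrib,
      sum_pick (fun _ => (1:ℤ)) i.isLt, sum_pick (fun _ => (-1:ℤ)) hi]
    ring

/-- The total coordinate sum of a linear combination of coroots is `2 c_{n-1}`. -/
lemma total_sum {n : ℕ} (hn : 1 ≤ n) (c : Fin n → ℤ) :
    ∑ j, (∑ i, c i • Bcoroot n i) j = 2 * c ⟨n - 1, by omega⟩ := by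
  have h1 : ∀ j : Fin n, (∑ i, c i • Bcoroot n i) j = ∑ i, c i * Bcoroot n i j := by
    intro j; simp [Finset.sum_apply]
  rw [Finset.sum_congr rfl fun j _ => h1 j, Finset.sum_comm]
  have h2 : ∀ i : Fin n, ∑ j, c i * Bcoroot n i j
      = if i.val = n - 1 then (fun k : Fin n => 2 * c k) i else 0 := by
    intro i
    rw [← Finset.mul_sum, sum_coords_coroot]
    split_ifs <;> ring
  rw [Finset.sum_congr rfl fun i _ => h2 i, sum_pick (fun k => 2 * c k) (by omega)]

/-- The coordinate sum of `ωₜ^∨`. -/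
lemma sum_Bomega {n t : ℕ} (h : t ≤ n) : ∑ j : Fin n, Bomega n t j = (t : ℤ) := by
  unfold Bomega
  rw [Fin.sum_univ_eq_sum_range (fun k => if k < t then (1:ℤ) else 0)]
  rw [← Finset.sum_filter]
  have : (Finset.range n).filter (fun k => k < t) = Finset.range t := by
    ext k; simp; omega
  rw [this, Finset.sum_const, Finset.card_range]
  simp

/-- A `{0,1}`-valued antitone vector with coordinate sum `s` is `ω_s^∨`. -/
lemma antitone01 {n : ℕ} {ν : Fin n → ℤ} (hA : Antitone ν)
    (h0 : ∀ j, 0 ≤ ν j) (h1 : ∀ j, ν j ≤ 1) {s : ℕ}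
    (hsum : ∑ j, ν j = (s : ℤ)) : ν = Bomega n s := by
  funext j
  show ν j = if j.val < s then 1 else 0
  by_cases hj : j.val < s
  · rw [if_pos hj]
    by_contra hne
    have hj0 : ν j ≤ 0 := by have := h1 j; have := h0 j; omega
    have hz : ∀ k, j ≤ k → ν k = 0 := fun k hk => le_antisymm (le_trans (hA hk) hj0) (h0 k)
    have hle : ∑ k, ν k ≤ ∑ k : Fin n, (if k < j then (1:ℤ) else 0) := by
      apply Finset.sum_le_sum
      intro k _
      by_cases hk : k < j
      · rw [if_pos hk]; exact h1 k
      · rw [if_neg hk, hz k (le_of_not_gt hk)]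
    rw [Finset.sum_boole] at hle
    have hcard : ({x | x < j} : Finset (Fin n)).card = j.val := by
      rw [Finset.filter_gt_eq_Iio, Fin.card_Iio]
    rw [hcard] at hle
    rw [hsum] at hle
    have := j.isLt
    omega
  · rw [if_neg hj]
    by_contra hne
    have hj1 : 1 ≤ ν j := by have := h1 j; have := h0 j; omega
    have ho : ∀ k, k ≤ j → 1 ≤ ν k := fun k hk => le_trans hj1 (hA hk)
    have hge : ∑ k : Fin n, (if k ≤ j then (1:ℤ) else 0) ≤ ∑ k, ν k := by
      apply Finset.sum_le_sum
      intro k _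
      by_cases hk : k ≤ j
      · rw [if_pos hk]; exact ho k hk
      · rw [if_neg hk]; exact h0 k
    rw [Finset.sum_boole] at hge
    have hcard : ({x | x ≤ j} : Finset (Fin n)).card = j.val + 1 := by
      rw [Finset.filter_ge_eq_Iic, Fin.card_Iic]
    rw [hcard, hsum] at hge
    omega

/-- in type `Bₙ` (`n ≥ 3`), for every odd `m` with `3 ≤ m ≤ n` the relation
`ω_{m-2}^∨ < ω_m^∨` is a covering relation in the dominance order: the difference is a
nonnegative combination of the simple coroots `α_j^∨` with positive coefficient exactly for
`j ∈ {m-1, …, n}` (0-based: `i.val ≥ m - 2`), and no dominant coweight lies strictly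
between them. -/
theorem stmt5 (n m : ℕ) (hn : 3 ≤ n) (hm3 : 3 ≤ m) (hmn : m ≤ n) (hodd : Odd m) :
    (∃ c : Fin n → ℕ,
        Bomega n m - Bomega n (m - 2) = ∑ i, (c i : ℤ) • Bcoroot n i ∧
        ∀ i, 0 < c i ↔ m - 2 ≤ i.val) ∧
    BdomLE n (Bomega n (m - 2)) (Bomega n m) ∧
    Bomega n (m - 2) ≠ Bomega n m ∧
    ¬ ∃ ν : Fin n → ℤ, Bdominant n ν ∧
        BdomLE n (Bomega n (m - 2)) ν ∧ BdomLE n ν (Bomega n m) ∧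
        ν ≠ Bomega n (m - 2) ∧ ν ≠ Bomega n m := by
  -- the explicit coefficients
  set g : ℕ → ℕ := fun k => if k < m - 2 then 0 else if k = m - 2 then 1
    else if k = n - 1 then 1 else 2 with hg
  set c : Fin n → ℕ := fun i => g i.val with hc
  have hmain : Bomega n m - Bomega n (m - 2) = ∑ i, (c i : ℤ) • Bcoroot n i := by
    funext j
    have hj := j.isLt
    have happ : (∑ i, (c i : ℤ) • Bcoroot n i) j = ∑ i, (c i : ℤ) * Bcoroot n i j := by
      simp [Finset.sum_apply]
    rw [Pi.sub_apply, happ, sumCoroot (fun i => (c i : ℤ)) j, sum_pick_pred]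
    show (if j.val < m then (1:ℤ) else 0) - (if j.val < m - 2 then (1:ℤ) else 0) = _
    simp only [hc, hg]
    push_cast
    split_ifs <;> omega
  refine ⟨⟨c, hmain, ?_⟩, ⟨c, hmain⟩, ?_, ?_⟩
  · intro i
    simp only [hc, hg]
    have := i.isLt
    split_ifs <;> omega
  · intro h
    have := congrFun h ⟨m - 1, by omega⟩
    simp only [Bomega] at this
    rw [if_neg (by omega : ¬ (m - 1 < m - 2)), if_pos (by omega : m - 1 < m)] at this
    omega
  · rintro ⟨ν, ⟨hA, h0⟩, ⟨c1, hc1⟩, ⟨c2, hc2⟩, hne1, hne2⟩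
    -- every coordinate is at most 1
    have j0lt : 0 < n := by omega
    have hν0 : ν ⟨0, j0lt⟩ ≤ 1 := by
      have := congrFun hc2 ⟨0, j0lt⟩
      rw [Pi.sub_apply] at this
      have happ : (∑ i, (c2 i : ℤ) • Bcoroot n i) ⟨0, j0lt⟩
          = ∑ i, (c2 i : ℤ) * Bcoroot n i ⟨0, j0lt⟩ := by
        simp [Finset.sum_apply]
      rw [happ, sumCoroot (fun i => (c2 i : ℤ)) ⟨0, j0lt⟩, sum_pick_pred] at this
      simp only [Bomega] at this
      rw [if_pos (by omega : (0:ℕ) < m)] at this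
      rw [if_neg (by omega : ¬ ((0:ℕ) = n - 1)), dif_neg (by omega : ¬ ((0:ℕ) < 0))] at this
      have : (1:ℤ) - ν ⟨0, j0lt⟩ = (c2 ⟨0, j0lt⟩ : ℤ) - 0 := this
      have hnn : (0:ℤ) ≤ (c2 ⟨0, j0lt⟩ : ℤ) := Int.natCast_nonneg _
      omega
    have h1 : ∀ j, ν j ≤ 1 := by
      intro j
      have : (⟨0, j0lt⟩ : Fin n) ≤ j := by simp [Fin.le_def]
      exact le_trans (hA this) hν0
    -- coordinate sums
    have hs1 := congrArg (fun v => ∑ j, v j) hc1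
    have hs2 := congrArg (fun v => ∑ j, v j) hc2
    simp only [Pi.sub_apply] at hs1 hs2
    rw [Finset.sum_sub_distrib, total_sum (by omega)] at hs1 hs2
    rw [sum_Bomega (by omega : m - 2 ≤ n)] at hs1
    rw [sum_Bomega (by omega : m ≤ n)] at hs2
    have ha : (0:ℤ) ≤ (c1 ⟨n-1, by omega⟩ : ℤ) := Int.natCast_nonneg _
    have hb : (0:ℤ) ≤ (c2 ⟨n-1, by omega⟩ : ℤ) := Int.natCast_nonneg _
    obtain ⟨k, hk⟩ := hodd
    have hS : (∑ j, ν j) = ((m - 2 : ℕ) : ℤ) ∨ (∑ j, ν j) = (m : ℤ) := by omega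
    rcases hS with hS | hS
    · exact hne1 (antitone01 hA h0 h1 hS)
    · exact hne2 (antitone01 hA h0 h1 (by rw [hS]))
end

section
/- In type Dₙ (n ≥ 5), the dominant coweight ω₁^∨ = e₁ has a unique minimal degeneration above it among dominant coweights congruent to it modulo the coroot lattice: the unique cover of ω₁^∨ in the dominance order is μ = (1,1,1,0,…,0) = ω₃^∨. -/
/-- The simple coroots of type `Dₙ` in `ℤⁿ`: `αᵢ^∨ = eᵢ - eᵢ₊₁` for `i ≤ n-1` and
`αₙ^∨ = e_{n-1} + eₙ` (indices `i : Fin n` are 0-based). -/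
def Dcoroot (n : ℕ) (i : Fin n) : Fin n → ℤ :=
  fun j => if i.val = n - 1 then (if j.val = n - 2 ∨ j.val = n - 1 then 1 else 0)
    else if j.val = i.val then 1 else if j.val = i.val + 1 then -1 else 0

/-- The fundamental coweight `ωₘ^∨ = e₁ + ⋯ + eₘ` of type `Dₙ` for `m ≤ n - 2`. -/
def Domega (n m : ℕ) : Fin n → ℤ := fun j => if j.val < m then 1 else 0

/-- Dominance order: `μ - λ` is a nonnegative integer combination of simple coroots. -/
def DdomLE (n : ℕ) (lam mu : Fin n → ℤ) : Prop :=
  ∃ c : Fin n → ℕ, mu - lam = ∑ i, (c i : ℤ) • Dcoroot n i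

/-- Dominant coweights of type `Dₙ`: `μ₁ ≥ ⋯ ≥ μₙ` and `μ_{n-1} + μₙ ≥ 0`. -/
def Ddominant (n : ℕ) (mu : Fin n → ℤ) : Prop :=
  Antitone mu ∧ ∀ i j : Fin n, i.val = n - 2 → j.val = n - 1 → 0 ≤ mu i + mu j

/-!
Write `x = ∑ bᵢ αᵢ^∨`. Reading off coordinates gives `bₘ = x₁ + ⋯ + xₘ` for `m ≤ n - 2`,
`2 b_{n-1} = x₁ + ⋯ + x_{n-1} - xₙ` and `2 bₙ = x₁ + ⋯ + xₙ`, so `λ ≤ μ` exactly when these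
partial sums of `x = μ - λ` are nonnegative and `x₁ + ⋯ + xₙ` is even.

A dominant `ν ≥ ω₁^∨` has `ν₁ ≥ 1`, odd total `ν₁ + ⋯ + νₙ`, and `ν₁ ≥ ⋯ ≥ ν_{n-1} ≥ |νₙ|`;
so its partial sums increase up to `n - 1` and both spin sums are at least the `(n-2)`-nd one.
If `ν₃ > 0` the sums start with `1, 2, 3` or more. If `ν₃ = 0` then `ν` is supported on the
first two coordinates, and `ν₁ + ν₂` is odd, positive and (as `ν ≠ ω₁^∨`) not `1`, hence `≥ 3`.
Either way the partial sums dominate those of `ω₃^∨`, namely `1, 2, 3, 3, …`: this is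
`ω₃^∨ ≤ ν`.
-/

open Finset

variable {n : ℕ}

def zeroExtend (x : Fin n → ℤ) (m : ℕ) : ℤ := if h : m < n then x ⟨m, h⟩ else 0

lemma zeroExtend_of_lt (x : Fin n → ℤ) {m : ℕ} (h : m < n) : zeroExtend x m = x ⟨m, h⟩ :=
  dif_pos h

lemma eq_iff_forall_zeroExtend_eq {x y : Fin n → ℤ} :
    x = y ↔ ∀ m < n, zeroExtend x m = zeroExtend y m := by
  refine ⟨fun h _ _ => h ▸ rfl, fun h => funext fun ⟨m, hm⟩ => ?_⟩
  simpa only [zeroExtend_of_lt _ hm] using h m hm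

lemma zeroExtend_sub (x y : Fin n → ℤ) (m : ℕ) :
    zeroExtend (x - y) m = zeroExtend x m - zeroExtend y m := by
  unfold zeroExtend; split_ifs <;> simp

lemma sum_ite_val_eq (b : Fin n → ℤ) (k : ℕ) :
    ∑ i : Fin n, (if i.val = k then b i else 0) = zeroExtend b k := by
  unfold zeroExtend
  split_ifs with hk
  · simpa [Fin.ext_iff] using sum_ite_eq' univ (⟨k, hk⟩ : Fin n) b
  · exact sum_eq_zero fun i _ => if_neg (by omega)

def partialSum (x : Fin n → ℤ) (k : ℕ) : ℤ := ∑ j ∈ range k, zeroExtend x j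

lemma partialSum_succ (x : Fin n → ℤ) (k : ℕ) :
    partialSum x (k + 1) = partialSum x k + zeroExtend x k :=
  sum_range_succ _ _

lemma partialSum_sub (x y : Fin n → ℤ) (k : ℕ) :
    partialSum (x - y) k = partialSum x k - partialSum y k := by
  simp only [partialSum, zeroExtend_sub, sum_sub_distrib]

lemma zeroExtend_domega {m : ℕ} (hm : m ≤ n) (j : ℕ) :
    zeroExtend (Domega n m) j = if j < m then 1 else 0 := by
  unfold zeroExtend Domega; split_ifs <;> first | rfl | omega

lemma zeroExtend_domega_of_le {m j : ℕ} (h : m ≤ j) : zeroExtend (Domega n m) j = 0 := by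
  simp only [zeroExtend, Domega, dite_eq_right_iff, ite_eq_right_iff, one_ne_zero, imp_false,
    not_lt]
  omega

lemma partialSum_domega {m : ℕ} (hm : m ≤ n) (k : ℕ) : partialSum (Domega n m) k = min k m := by
  induction k with
  | zero => simp [partialSum]
  | succ k ih =>
    rw [partialSum_succ, ih, zeroExtend_domega hm]
    split_ifs <;> omega

/-- `b m - b (m - 1)` comes from the coroots `eᵢ - eᵢ₊₁`, and `b (n - 1)` in the last two slots
from `e_{n-2} + e_{n-1}`, which is why `b (n - 1)` is not also counted at `m = n - 1`. -/
def corootSum (n : ℕ) (b : ℕ → ℤ) (m : ℕ) : ℤ :=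
  (if m = n - 1 then 0 else b m) - (if m = 0 then 0 else b (m - 1)) +
    (if n - 2 ≤ m then b (n - 1) else 0)

lemma dcoroot_apply_eq (i j : Fin n) :
    Dcoroot n i j = (if j.val = n - 1 then 0 else if i.val = j.val then 1 else 0)
      - (if j.val = 0 then 0 else if i.val = j.val - 1 then 1 else 0)
      + (if n - 2 ≤ j.val then if i.val = n - 1 then 1 else 0 else 0) := by
  obtain ⟨i, hi⟩ := i
  obtain ⟨j, hj⟩ := j
  simp only [Dcoroot]
  split_ifs <;> omega

theorem zeroExtend_sum_smul_dcoroot (b : Fin n → ℤ) {m : ℕ} (hm : m < n) :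
    zeroExtend (∑ i, b i • Dcoroot n i) m = corootSum n (zeroExtend b) m := by
  simp only [zeroExtend_of_lt _ hm, Finset.sum_apply, Pi.smul_apply, smul_eq_mul,
    dcoroot_apply_eq, mul_add, mul_sub, mul_ite, mul_one, mul_zero, sum_add_distrib,
    sum_sub_distrib, sum_ite_irrel, sum_const_zero, sum_ite_val_eq, corootSum]

section corootSum

variable (k : ℕ) (b : ℕ → ℤ)

lemma corootSum_zero : corootSum (k + 3) b 0 = b 0 := by
  simp (disch := omega) [corootSum]

lemma corootSum_succ {m : ℕ} (hm : m < k) :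
    corootSum (k + 3) b (m + 1) = b (m + 1) - b m := by
  rw [corootSum, if_neg (by omega), if_neg (by omega), if_neg (by omega), Nat.add_sub_cancel]
  ring

lemma corootSum_add_one : corootSum (k + 3) b (k + 1) = b (k + 1) - b k + b (k + 2) := by
  simp (disch := omega) [corootSum]

lemma corootSum_add_two : corootSum (k + 3) b (k + 2) = b (k + 2) - b (k + 1) := by
  simp (disch := omega) [corootSum, neg_add_eq_sub]

end corootSum

theorem forall_eq_corootSum_iff (hn : 3 ≤ n) {b x : ℕ → ℤ} :
    (∀ m < n, x m = corootSum n b m) ↔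
      (∀ m ≤ n - 3, b m = ∑ j ∈ range (m + 1), x j) ∧
        2 * b (n - 2) = ∑ j ∈ range (n - 1), x j - x (n - 1) ∧
        2 * b (n - 1) = ∑ j ∈ range n, x j := by
  obtain ⟨k, rfl⟩ : ∃ k, n = k + 3 := ⟨n - 3, by omega⟩
  simp only [show k + 3 - 1 = k + 2 by omega, show k + 3 - 2 = k + 1 by omega,
    show k + 3 - 3 = k by omega]
  have hS : ∀ m, ∑ j ∈ range (m + 1), x j = ∑ j ∈ range m, x j + x m :=
    fun m => sum_range_succ _ _
  have hS1 : ∑ j ∈ range (k + 2), x j = ∑ j ∈ range (k + 1), x j + x (k + 1) := hS _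
  have hS2 : ∑ j ∈ range (k + 3), x j = ∑ j ∈ range (k + 2), x j + x (k + 2) := hS _
  have hsub := corootSum_add_one k b
  have htop := corootSum_add_two k b
  constructor
  · intro hx
    have hlow : ∀ m ≤ k, b m = ∑ j ∈ range (m + 1), x j := by
      intro m hm
      induction m with
      | zero => simp [hx 0 (by omega), corootSum_zero]
      | succ m ih =>
        rw [hS (m + 1), ← ih (by omega), hx (m + 1) (by omega), corootSum_succ k b hm]
        ring
    have h1 := hx (k + 1) (by omega)
    have h2 := hx (k + 2) (by omega)
    have hk := hlow k le_rfl
    exact ⟨hlow, by omega, by omega⟩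
  · rintro ⟨hlow, hsub', htop'⟩ m hm
    have hk := hlow k le_rfl
    obtain rfl | ⟨j, hj, rfl⟩ | rfl | rfl :
        m = 0 ∨ (∃ j < k, m = j + 1) ∨ m = k + 1 ∨ m = k + 2 := by
      rcases m with _ | j
      · exact Or.inl rfl
      · rcases lt_or_ge j k with hj | hj
        · exact Or.inr (Or.inl ⟨j, hj, rfl⟩)
        · omega
    · simp [corootSum_zero, hlow 0 (by omega)]
    · rw [corootSum_succ k b hj, hlow (j + 1) hj, hlow j hj.le, hS (j + 1)]
      ring
    · omega
    · omega

theorem eq_sum_smul_dcoroot_iff (hn : 3 ≤ n) (x b : Fin n → ℤ) :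
    x = ∑ i, b i • Dcoroot n i ↔
      (∀ m ≤ n - 3, zeroExtend b m = partialSum x (m + 1)) ∧
        2 * zeroExtend b (n - 2) = partialSum x (n - 1) - zeroExtend x (n - 1) ∧
        2 * zeroExtend b (n - 1) = partialSum x n := by
  rw [eq_iff_forall_zeroExtend_eq]
  refine (forall₂_congr fun m hm => ?_).trans (forall_eq_corootSum_iff hn)
  rw [zeroExtend_sum_smul_dcoroot b hm]
theorem exists_nat_eq_sum_smul_dcoroot (hn : 3 ≤ n) {x : Fin n → ℤ}
    (heven : Even (partialSum x n)) (hlow : ∀ k, 1 ≤ k → k ≤ n - 2 → 0 ≤ partialSum x k)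
    (hsub : zeroExtend x (n - 1) ≤ partialSum x (n - 1)) (htop : 0 ≤ partialSum x n) :
    ∃ c : Fin n → ℕ, x = ∑ i, (c i : ℤ) • Dcoroot n i := by
  set b : ℕ → ℤ := fun m => if m ≤ n - 3 then partialSum x (m + 1)
    else if m = n - 2 then (partialSum x (n - 1) - zeroExtend x (n - 1)) / 2
    else partialSum x n / 2
  have hdvd : 2 ∣ partialSum x (n - 1) - zeroExtend x (n - 1) := by
    have hlast := partialSum_succ x (n - 1)
    rw [Nat.sub_add_cancel (by omega)] at hlast
    rw [← even_iff_two_dvd, show partialSum x (n - 1) - zeroExtend x (n - 1) =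
      partialSum x n - 2 * zeroExtend x (n - 1) by rw [hlast]; ring]
    exact heven.sub (even_two_mul _)
  have hb0 : ∀ m < n, 0 ≤ b m := by
    intro m hm
    simp only [b]
    split_ifs
    · exact hlow _ (by omega) (by omega)
    · omega
    · omega
  refine ⟨fun i => (b i).toNat, (eq_sum_smul_dcoroot_iff hn x _).2 ?_⟩
  have hcb : ∀ m < n, zeroExtend (fun i => ((b i).toNat : ℤ)) m = b m := fun m hm => by
    rw [zeroExtend_of_lt _ hm, Int.toNat_of_nonneg (hb0 m hm)]
  refine ⟨fun m hm => ?_, ?_, ?_⟩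
  · rw [hcb m (by omega)]
    exact if_pos hm
  · rw [hcb _ (by omega)]
    simp only [b, if_neg (show ¬n - 2 ≤ n - 3 by omega)]
    exact Int.mul_ediv_cancel' hdvd
  · rw [hcb _ (by omega)]
    simp only [b, if_neg (show ¬n - 1 ≤ n - 3 by omega), if_neg (show n - 1 ≠ n - 2 by omega)]
    exact Int.mul_ediv_cancel' heven.two_dvd

theorem ddomLE_iff (hn : 3 ≤ n) (lam mu : Fin n → ℤ) :
    DdomLE n lam mu ↔ Even (partialSum (mu - lam) n) ∧
      (∀ k, 1 ≤ k → k ≤ n - 2 → 0 ≤ partialSum (mu - lam) k) ∧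
      zeroExtend (mu - lam) (n - 1) ≤ partialSum (mu - lam) (n - 1) ∧
      0 ≤ partialSum (mu - lam) n := by
  refine ⟨fun ⟨c, hc⟩ => ?_, fun ⟨heven, hlow, hsub, htop⟩ =>
    exists_nat_eq_sum_smul_dcoroot hn heven hlow hsub htop⟩
  obtain ⟨hlow, hsub, htop⟩ := (eq_sum_smul_dcoroot_iff hn _ _).1 hc
  have hc0 : ∀ m, 0 ≤ zeroExtend (fun i => (c i : ℤ)) m := fun m => by
    unfold zeroExtend; split_ifs <;> simp
  refine ⟨⟨_, by rw [← htop]; ring⟩, fun k hk hk' => ?_, by linarith [hc0 (n - 2)],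
    by linarith [hc0 (n - 1)]⟩
  obtain ⟨m, rfl⟩ : ∃ m, k = m + 1 := ⟨k - 1, by omega⟩
  exact hlow m (by omega) ▸ hc0 m

namespace Ddominant

variable {ν : Fin n → ℤ}

lemma zeroExtend_le (h : Ddominant n ν) {i j : ℕ} (hij : i ≤ j) (hj : j < n) :
    zeroExtend ν j ≤ zeroExtend ν i := by
  rw [zeroExtend_of_lt _ hj, zeroExtend_of_lt _ (by omega)]
  exact h.1 (Fin.mk_le_mk.2 hij)

lemma zeroExtend_add_nonneg (h : Ddominant n ν) (hn : 2 ≤ n) :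
    0 ≤ zeroExtend ν (n - 2) + zeroExtend ν (n - 1) := by
  rw [zeroExtend_of_lt _ (by omega), zeroExtend_of_lt _ (by omega)]
  exact h.2 _ _ rfl rfl

lemma zeroExtend_nonneg (h : Ddominant n ν) {j : ℕ} (hj : j ≤ n - 2) (hn : 2 ≤ n) :
    0 ≤ zeroExtend ν j := by
  have := h.zeroExtend_le hj (by omega)
  have := h.zeroExtend_le (show n - 2 ≤ n - 1 by omega) (by omega)
  linarith [h.zeroExtend_add_nonneg hn]

lemma zeroExtend_eq_zero (h : Ddominant n ν) {i j : ℕ} (hi : i ≤ n - 2) (hn : 2 ≤ n)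
    (h0 : zeroExtend ν i = 0) (hij : i ≤ j) : zeroExtend ν j = 0 := by
  rcases lt_or_ge j n with hj | hj
  · have := h.zeroExtend_le hij hj
    have := h.zeroExtend_le hi (show n - 2 < n by omega)
    have := h.zeroExtend_le (show n - 2 ≤ n - 1 by omega) (by omega)
    have := h.zeroExtend_add_nonneg hn
    rcases (by omega : j ≤ n - 2 ∨ j = n - 1) with hj' | rfl
    · linarith [h.zeroExtend_nonneg hj' hn]
    · linarith
  · exact dif_neg (by omega)

lemma partialSum_mono (h : Ddominant n ν) (hn : 2 ≤ n) {k k' : ℕ} (hkk' : k ≤ k')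
    (hk' : k' ≤ n - 1) : partialSum ν k ≤ partialSum ν k' :=
  sum_le_sum_of_subset_of_nonneg (range_subset_range.2 hkk')
    fun j hj _ => h.zeroExtend_nonneg (by have := mem_range.1 hj; omega) hn

lemma two_le_partialSum_two_and_three_le_partialSum_three (h : Ddominant n ν) (hn : 4 ≤ n)
    (h0 : 1 ≤ zeroExtend ν 0) (hodd : Odd (partialSum ν n)) (hne : ν ≠ Domega n 1) :
    2 ≤ partialSum ν 2 ∧ 3 ≤ partialSum ν 3 := by
  have hP2 : partialSum ν 2 = zeroExtend ν 0 + zeroExtend ν 1 := by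
    simp [partialSum, sum_range_succ]
  have hP3 : partialSum ν 3 = partialSum ν 2 + zeroExtend ν 2 := sum_range_succ _ _
  have h10 := h.zeroExtend_le (show 0 ≤ 1 by omega) (by omega)
  have h21 := h.zeroExtend_le (show 1 ≤ 2 by omega) (by omega)
  rcases (h.zeroExtend_nonneg (show 2 ≤ n - 2 by omega) (by omega)).lt_or_eq with h2 | h2
  · omega
  have hPn : partialSum ν 2 = partialSum ν n :=
    sum_subset (range_subset_range.2 (by omega)) fun j _ hj =>
      h.zeroExtend_eq_zero (show 2 ≤ n - 2 by omega) (by omega) h2.symm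
        (by simp only [mem_range, not_lt] at hj; omega)
  suffices 3 ≤ partialSum ν 2 by omega
  obtain ⟨r, hr⟩ := hodd
  rcases (h.zeroExtend_nonneg (show 1 ≤ n - 2 by omega) (by omega)).lt_or_eq with h1 | h1
  · omega
  suffices zeroExtend ν 0 ≠ 1 by omega
  intro h0'
  refine hne (eq_iff_forall_zeroExtend_eq.2 fun m hm => ?_)
  rw [zeroExtend_domega (by omega)]
  rcases m with _ | m
  · exact h0'
  · exact h.zeroExtend_eq_zero (show 1 ≤ n - 2 by omega) (by omega) h1.symm (by omega)

lemma min_three_le_partialSum (h : Ddominant n ν) (hn : 5 ≤ n) (h0 : 1 ≤ zeroExtend ν 0)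
    (hodd : Odd (partialSum ν n)) (hne : ν ≠ Domega n 1) :
    (∀ k ≤ n - 2, min k 3 ≤ partialSum ν k) ∧
      3 + zeroExtend ν (n - 1) ≤ partialSum ν (n - 1) ∧ 3 ≤ partialSum ν n := by
  obtain ⟨h2, h3⟩ := h.two_le_partialSum_two_and_three_le_partialSum_three (by omega) h0 hodd hne
  have hmono : ∀ k, 3 ≤ k → k ≤ n - 2 → 3 ≤ partialSum ν k := fun k hk hk' =>
    h3.trans (h.partialSum_mono (by omega) hk (by omega))
  have hsub := partialSum_succ ν (n - 1)
  have hsub' := partialSum_succ ν (n - 2)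
  rw [Nat.sub_add_cancel (by omega)] at hsub
  rw [show n - 2 + 1 = n - 1 by omega] at hsub'
  have hlast := h.zeroExtend_le (show n - 2 ≤ n - 1 by omega) (by omega)
  have hsum := h.zeroExtend_add_nonneg (by omega)
  have hn2 := hmono (n - 2) (by omega) le_rfl
  refine ⟨fun k hk => ?_, by omega, by omega⟩
  rcases (by omega : k = 0 ∨ k = 1 ∨ k = 2 ∨ 3 ≤ k) with rfl | rfl | rfl | hk3
  · simp [partialSum]
  · simpa [partialSum] using h0
  · simpa using h2
  · simpa [min_eq_right hk3] using hmono k hk3 hk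

end Ddominant

lemma one_le_zeroExtend_zero_and_odd_partialSum (hn : 3 ≤ n) {ν : Fin n → ℤ}
    (hle : DdomLE n (Domega n 1) ν) : 1 ≤ zeroExtend ν 0 ∧ Odd (partialSum ν n) := by
  obtain ⟨⟨r, hr⟩, hpos, -, -⟩ := (ddomLE_iff hn _ _).1 hle
  simp only [partialSum_sub, partialSum_domega (show 1 ≤ n by omega),
    min_eq_right (show 1 ≤ n by omega)] at hr hpos
  exact ⟨by simpa [partialSum] using hpos 1 le_rfl (by omega), ⟨r, by omega⟩⟩

/-- in type `Dₙ` (`n ≥ 5`), `ω₁^∨ = e₁` has a unique minimal degeneration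
among dominant coweights congruent to it modulo the coroot lattice: its unique cover in
the dominance order is `ω₃^∨ = (1,1,1,0,…,0)`. -/
theorem stmt7 (n : ℕ) (hn : 5 ≤ n) :
    (DdomLE n (Domega n 1) (Domega n 3) ∧ Domega n 3 ≠ Domega n 1) ∧
    (∀ ν : Fin n → ℤ, Ddominant n ν →
      (∃ c : Fin n → ℤ, ν - Domega n 1 = ∑ i, c i • Dcoroot n i) →
      DdomLE n (Domega n 1) ν → ν ≠ Domega n 1 → DdomLE n (Domega n 3) ν) := by
  have hω : ∀ k, partialSum (Domega n 3) k = min k 3 ∧ partialSum (Domega n 1) k = min k 1 :=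
    fun k => ⟨partialSum_domega (by omega) k, partialSum_domega (by omega) k⟩
  have hlast : zeroExtend (Domega n 3) (n - 1) = 0 ∧ zeroExtend (Domega n 1) (n - 1) = 0 :=
    ⟨zeroExtend_domega_of_le (by omega), zeroExtend_domega_of_le (by omega)⟩
  refine ⟨⟨(ddomLE_iff (by omega) _ _).2 ?_, fun h => ?_⟩, fun ν hdom _ hle hne => ?_⟩
  · simp only [partialSum_sub, zeroExtend_sub, hω, hlast]
    exact ⟨⟨1, by omega⟩, fun k _ _ => by omega, by omega, by omega⟩
  · simpa [Domega] using congrFun h ⟨2, by omega⟩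
  · obtain ⟨h0, hodd⟩ := one_le_zeroExtend_zero_and_odd_partialSum (by omega) hle
    obtain ⟨hk, hspin, htotal⟩ := hdom.min_three_le_partialSum hn h0 hodd hne
    obtain ⟨r, hr⟩ := hodd
    refine (ddomLE_iff (by omega) _ _).2 ?_
    simp only [partialSum_sub, zeroExtend_sub, hω, hlast]
    exact ⟨⟨r - 1, by omega⟩, fun k _ hk' => by linarith [hk k hk'], by omega, by omega⟩
end

section
/- Let n ≥ 4 be even, and let X = {v ∈ ℤⁿ : Σvᵢ even} + ℤ·(½,…,½) ⊂ ℝⁿ (the cocharacter lattice of the half-spin group of type Dₙ). Let L = {0} ⊕ ℚ^{n-1} ⊂ ℝⁿ (the span of the coroots e_i - e_{i+1} for 2 ≤ i ≤ n-1 and e_{n-1}+eₙ). Then L ∩ X = {v ∈ {0} ⊕ ℤ^{n-1} : Σvᵢ even}, i.e. it equals the lattice generated by those coroots; in particular the quotient (L ∩ X)/(ℤ-span of these coroots) is trivial. -/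
/-!
A vector `w + t/2 · (1,…,1)` of `X` with vanishing first coordinate has `t/2 = -w₀ ∈ ℤ`, so it
is integral, and its coordinate sum `Σ wᵢ - n w₀` is even because `n` is. Conversely, modulo
the coroot lattice `e_i ≡ e_{i+1}` for `1 ≤ i ≤ n - 2` and `e_{n-2} ≡ -e_{n-1}`, so every
`e_i` with `i ≥ 1` is congruent to `e_{n-1}` and `2 e_{n-1} ≡ 0`; an integral vector `v` with
`v₀ = 0` is then congruent to `(Σ vᵢ) e_{n-1}`, which vanishes when the sum is even.
-/

/-- Membership in the cocharacter lattice `X = ℤⁿ_even + ℤ·(½,…,½)` of the half-spin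
group of type `Dₙ`, inside `ℚⁿ`. -/
def InHalfSpinLattice (n : ℕ) (v : Fin n → ℚ) : Prop :=
  ∃ (w : Fin n → ℤ) (t : ℤ), Even (∑ i, w i) ∧ v = fun i => (w i : ℚ) + (t : ℚ) / 2

/-- `e_i ∈ Rⁿ` for a natural index `i`; the zero vector when `n ≤ i`. -/
def stdVec (R : Type*) [Zero R] [One R] (n i : ℕ) : Fin n → R :=
  fun j => if (j : ℕ) = i then 1 else 0

section stdVec

variable {R : Type*} {n : ℕ}

@[simp]
lemma Int.cast_stdVec [AddCommGroupWithOne R] (i : ℕ) (j : Fin n) :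
    ((stdVec ℤ n i j : ℤ) : R) = stdVec R n i j := by
  unfold stdVec
  split_ifs <;> simp

lemma stdVec_eq_single [Zero R] [One R] {i : ℕ} (hi : i < n) :
    stdVec R n i = Pi.single ⟨i, hi⟩ 1 := by
  funext j
  simp [stdVec, Pi.single_apply, Fin.ext_iff]

lemma sum_stdVec [AddCommMonoidWithOne R] {i : ℕ} (hi : i < n) : ∑ j, stdVec R n i j = 1 := by
  simp [stdVec_eq_single hi]

lemma sum_zsmul_stdVec [AddCommGroupWithOne R] (w : Fin n → ℤ) :
    ∑ j : Fin n, w j • stdVec R n j = fun j => (w j : R) := by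
  funext k
  simp [Finset.sum_apply, stdVec, Fin.val_inj]

lemma coroot_eq_stdVec_sub [AddCommGroupWithOne R] (i : ℕ) :
    (fun j : Fin n => if j.val = i then (1 : R) else if j.val = i + 1 then -1 else 0) =
      stdVec R n i - stdVec R n (i + 1) := by
  funext j
  simp only [stdVec, Pi.sub_apply]
  split_ifs <;> first | omega | simp

lemma coroot_eq_stdVec_add [AddCommGroupWithOne R] (hn : 2 ≤ n) :
    (fun j : Fin n => if j.val = n - 2 ∨ j.val = n - 1 then (1 : R) else 0) =
      stdVec R n (n - 2) + stdVec R n (n - 1) := by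
  funext j
  simp only [stdVec, Pi.add_apply]
  split_ifs <;> first | omega | simp

end stdVec

/-- With `0`-based coordinates: the span of `e_i - e_{i+1}` for `1 ≤ i ≤ n - 2` and of
`e_{n-2} + e_{n-1}`. -/
def corootLattice (n : ℕ) : AddSubgroup (Fin n → ℚ) :=
  AddSubgroup.closure
    ({x : Fin n → ℚ | ∃ i : Fin n, 1 ≤ i.val ∧ i.val ≤ n - 2 ∧
        x = fun j => if j.val = i.val then 1 else if j.val = i.val + 1 then -1 else 0} ∪
     {x : Fin n → ℚ | x = fun j => if j.val = n - 2 ∨ j.val = n - 1 then 1 else 0})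

/-- The root lattice `D_{n-1}`, placed on the last `n - 1` coordinates of `ℚⁿ`. -/
def tailRootLatticeD (n : ℕ) : AddSubgroup (Fin n → ℚ) where
  carrier := {v | (∀ i : Fin n, i.val = 0 → v i = 0) ∧
    ∃ w : Fin n → ℤ, (∀ i, v i = w i) ∧ Even (∑ i, w i)}
  zero_mem' := ⟨fun _ _ => rfl, 0, fun _ => by simp, by simp⟩
  add_mem' := by
    rintro a b ⟨ha0, wa, hwa, hea⟩ ⟨hb0, wb, hwb, heb⟩
    refine ⟨fun i hi => by simp [ha0 i hi, hb0 i hi], wa + wb, fun i => by simp [hwa, hwb], ?_⟩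
    simpa only [Pi.add_apply, Finset.sum_add_distrib] using hea.add heb
  neg_mem' := by
    rintro a ⟨ha0, wa, hwa, hea⟩
    refine ⟨fun i hi => by simp [ha0 i hi], -wa, fun i => by simp [hwa], ?_⟩
    simpa only [Pi.neg_apply, Finset.sum_neg_distrib] using hea.neg

namespace corootLattice

variable {n : ℕ}

local notation "π" => QuotientAddGroup.mk (s := corootLattice n)

lemma mk_stdVec_eq_succ {i : ℕ} (hi₁ : 1 ≤ i) (hi₂ : i ≤ n - 2) :
    π (stdVec ℚ n i) = π (stdVec ℚ n (i + 1)) := by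
  rw [QuotientAddGroup.eq_iff_sub_mem, ← coroot_eq_stdVec_sub]
  exact AddSubgroup.subset_closure (Or.inl ⟨⟨i, by omega⟩, hi₁, hi₂, rfl⟩)

lemma mk_stdVec_eq_last {i : ℕ} (hi₁ : 1 ≤ i) (hi₂ : i ≤ n - 1) :
    π (stdVec ℚ n i) = π (stdVec ℚ n (n - 1)) := by
  refine Nat.decreasingInduction'
    (P := fun k => 1 ≤ k → π (stdVec ℚ n k) = π (stdVec ℚ n (n - 1)))
    (fun k hk _ ih hk₁ => (mk_stdVec_eq_succ hk₁ (by omega)).trans (ih (by omega)))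
    hi₂ (fun _ => rfl) hi₁

lemma two_zsmul_mk_stdVec_last (hn : 3 ≤ n) : (2 : ℤ) • π (stdVec ℚ n (n - 1)) = 0 := by
  have hβ : stdVec ℚ n (n - 2) + stdVec ℚ n (n - 1) ∈ corootLattice n := by
    rw [← coroot_eq_stdVec_add (by omega)]
    exact AddSubgroup.subset_closure (Or.inr rfl)
  calc (2 : ℤ) • π (stdVec ℚ n (n - 1))
      = π (stdVec ℚ n (n - 2)) + π (stdVec ℚ n (n - 1)) := by
        rw [two_zsmul, mk_stdVec_eq_last (i := n - 2) (by omega) (by omega)]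
    _ = 0 := (QuotientAddGroup.eq_zero_iff _).mpr hβ

lemma _root_.tailRootLatticeD_le_corootLattice (hn : 3 ≤ n) :
    tailRootLatticeD n ≤ corootLattice n := by
  rintro v ⟨hv₀, w, hw, m, hm⟩
  obtain rfl : v = ∑ j, w j • stdVec ℚ n j := by
    rw [sum_zsmul_stdVec]
    exact funext hw
  have hmk : ∀ j : Fin n, w j • π (stdVec ℚ n j) = w j • π (stdVec ℚ n (n - 1)) := by
    intro j
    rcases Nat.eq_zero_or_pos j with hj | hj
    · have : w j = 0 := by exact_mod_cast (hw j).symm.trans (hv₀ j hj)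
      simp [this]
    · rw [mk_stdVec_eq_last hj (by omega)]
  rw [← QuotientAddGroup.eq_zero_iff]
  calc (π (∑ j, w j • stdVec ℚ n j))
      = ∑ j, w j • π (stdVec ℚ n j) := by simp [QuotientAddGroup.mk_sum]
    _ = (∑ j, w j) • π (stdVec ℚ n (n - 1)) := by
        rw [Finset.sum_congr rfl fun j _ => hmk j, ← Finset.sum_smul]
    _ = m • (2 : ℤ) • π (stdVec ℚ n (n - 1)) := by rw [hm, smul_smul, mul_two]
    _ = 0 := by rw [two_zsmul_mk_stdVec_last hn, smul_zero]

end corootLattice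

lemma corootLattice_le_tailRootLatticeD {n : ℕ} (hn : 3 ≤ n) :
    corootLattice n ≤ tailRootLatticeD n := by
  refine (AddSubgroup.closure_le _).mpr ?_
  rintro _ (⟨i, hi₁, hi₂, rfl⟩ | rfl)
  · rw [coroot_eq_stdVec_sub]
    refine ⟨fun j hj => ?_, stdVec ℤ n i - stdVec ℤ n (i + 1), fun j => by simp, ?_⟩
    · simp [stdVec, hj]
      omega
    · simp [Finset.sum_sub_distrib, sum_stdVec i.isLt, sum_stdVec (show i.val + 1 < n by omega)]
  · rw [coroot_eq_stdVec_add (by omega)]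
    refine ⟨fun j hj => ?_, stdVec ℤ n (n - 2) + stdVec ℤ n (n - 1), fun j => by simp, ?_⟩
    · simp [stdVec, hj, show 0 ≠ n - 2 by omega, show 0 ≠ n - 1 by omega]
    · simp [Finset.sum_add_distrib, sum_stdVec (show n - 2 < n by omega),
        sum_stdVec (show n - 1 < n by omega)]

lemma corootLattice_eq_tailRootLatticeD {n : ℕ} (hn : 3 ≤ n) :
    corootLattice n = tailRootLatticeD n :=
  le_antisymm (corootLattice_le_tailRootLatticeD hn) (tailRootLatticeD_le_corootLattice hn)

lemma inHalfSpinLattice_iff {n : ℕ} (hn : 0 < n) (heven : Even n) {v : Fin n → ℚ}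
    (hv₀ : ∀ i : Fin n, i.val = 0 → v i = 0) :
    InHalfSpinLattice n v ↔ ∃ w : Fin n → ℤ, (∀ i, v i = w i) ∧ Even (∑ i, w i) := by
  constructor
  · rintro ⟨w, t, hsum, rfl⟩
    set w₀ := w ⟨0, hn⟩
    have ht : (t : ℚ) / 2 = -w₀ := by linarith [hv₀ ⟨0, hn⟩ rfl]
    refine ⟨fun i => w i - w₀, fun i => by simp [ht, sub_eq_add_neg], ?_⟩
    rw [Finset.sum_sub_distrib, Finset.sum_const, Finset.card_univ, Fintype.card_fin, nsmul_eq_mul]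
    exact hsum.sub ((heven.natCast (α := ℤ)).mul_right _)
  · rintro ⟨w, hw, hsum⟩
    exact ⟨w, 0, hsum, funext fun i => by simp [hw]⟩

/-- for `n ≥ 4` even, the intersection of `L = 0 ⊕ ℚ^{n-1}` (the span of
the coroots `eᵢ - eᵢ₊₁` for `2 ≤ i ≤ n-1` and `e_{n-1} + eₙ`) with
`X = ℤⁿ_even + ℤ·(½,…,½)` equals `{v ∈ 0 ⊕ ℤ^{n-1} : Σ vᵢ even}`, i.e. it equals the
`ℤ`-span of those coroots (so the quotient by the coroot lattice is trivial). -/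
theorem stmt10 (n : ℕ) (hn : 4 ≤ n) (heven : Even n) :
    (∀ v : Fin n → ℚ,
      ((∀ i : Fin n, i.val = 0 → v i = 0) ∧ InHalfSpinLattice n v) ↔
      ((∀ i : Fin n, i.val = 0 → v i = 0) ∧ ∃ w : Fin n → ℤ, (∀ i, v i = (w i : ℚ)) ∧ Even (∑ i, w i))) ∧
    (∀ v : Fin n → ℚ,
      ((∀ i : Fin n, i.val = 0 → v i = 0) ∧ InHalfSpinLattice n v) ↔
      v ∈ AddSubgroup.closure
        ({x : Fin n → ℚ | ∃ i : Fin n, 1 ≤ i.val ∧ i.val ≤ n - 2 ∧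
            x = fun j => if j.val = i.val then 1 else if j.val = i.val + 1 then -1 else 0} ∪
         {x : Fin n → ℚ | x = fun j => if j.val = n - 2 ∨ j.val = n - 1 then 1 else 0})) := by
  have hX (v : Fin n → ℚ) :
      ((∀ i : Fin n, i.val = 0 → v i = 0) ∧ InHalfSpinLattice n v) ↔ v ∈ tailRootLatticeD n :=
    and_congr_right (inHalfSpinLattice_iff (by omega) heven)
  have hD : corootLattice n = tailRootLatticeD n := corootLattice_eq_tailRootLatticeD (by omega)
  exact ⟨hX, fun v => (hX v).trans (SetLike.ext_iff.mp hD v).symm⟩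
end

section
/- In type Cₙ (n ≥ 2), the chain of dominant coweights 0 < ω₁^∨ < ω₂^∨ < ⋯ < ω_{n-1}^∨ < 2ωₙ^∨ consists of covering relations in the dominance order, and moreover ωₘ^∨ < ω₁^∨ + ω_{m-1}^∨ is also a covering relation for 2 ≤ m ≤ n-1. -/
/-! Pairing with the fundamental weights `e₁ + ⋯ + eₜ` turns dominance into a comparison of
partial sums. A dominant coweight whose first entry is at most `1` is a `0/1` vector, hence some
`ω_k^∨`, and comparing total sums pins down `k`. Between `ωₘ^∨` and `ω₁^∨ + ω_{m-1}^∨` the first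
entry is `1` or `2`; in the second case the second entry is at most `1`, so subtracting `ω₁^∨`
leaves a `0/1` dominant coweight and the same argument applies. -/

/-- The simple coroots of type `Cₙ` in `ℤⁿ`: `αᵢ^∨ = eᵢ - eᵢ₊₁` for `i < n` and
`αₙ^∨ = eₙ` (indices `i : Fin n` are 0-based). -/
def Ccoroot (n : ℕ) (i : Fin n) : Fin n → ℤ :=
  fun j => if i.val = n - 1 then (if j = i then 1 else 0)
    else if j.val = i.val then 1 else if j.val = i.val + 1 then -1 else 0

/-- The fundamental coweight `ωₘ^∨ = e₁ + ⋯ + eₘ` of type `Cₙ`. -/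
def Comega (n m : ℕ) : Fin n → ℤ := fun j => if j.val < m then 1 else 0

/-- Dominance order: `μ - λ` is a nonnegative integer combination of simple coroots. -/
def CdomLE (n : ℕ) (lam mu : Fin n → ℤ) : Prop :=
  ∃ c : Fin n → ℕ, mu - lam = ∑ i, (c i : ℤ) • Ccoroot n i

/-- Dominant coweights of type `Cₙ`: weakly decreasing with nonnegative entries. -/
def Cdominant (n : ℕ) (mu : Fin n → ℤ) : Prop :=
  Antitone mu ∧ ∀ j, 0 ≤ mu j

/-- Covering relation in the dominance order on dominant coweights of type `Cₙ`. -/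
def CCover (n : ℕ) (lam mu : Fin n → ℤ) : Prop :=
  CdomLE n lam mu ∧ lam ≠ mu ∧
  ¬ ∃ ν : Fin n → ℤ, Cdominant n ν ∧ CdomLE n lam ν ∧ CdomLE n ν mu ∧ ν ≠ lam ∧ ν ≠ mu

section

variable {n : ℕ}

theorem Comega_zero : Comega n 0 = 0 := by
  funext j
  simp [Comega]

theorem Comega_of_le {t : ℕ} (h : n ≤ t) : Comega n t = fun _ => 1 := by
  funext j
  simp [Comega, j.isLt.trans_le h]

theorem Comega_succ (j : Fin n) : Comega n (j + 1) = Comega n j + Pi.single j 1 := by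
  funext i
  simp only [Comega, Pi.add_apply, Pi.single_apply, Fin.ext_iff]
  split_ifs <;> omega

theorem Comega_succ_dotProduct (j : Fin n) (d : Fin n → ℤ) :
    Comega n (j + 1) ⬝ᵥ d = Comega n j ⬝ᵥ d + d j := by
  rw [Comega_succ, add_dotProduct, single_dotProduct, one_mul]

theorem Comega_one_dotProduct (hn : 0 < n) (d : Fin n → ℤ) : Comega n 1 ⬝ᵥ d = d ⟨0, hn⟩ := by
  simpa [Comega_zero] using Comega_succ_dotProduct ⟨0, hn⟩ d

theorem Comega_two_dotProduct (hn : 1 < n) (d : Fin n → ℤ) :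
    Comega n 2 ⬝ᵥ d = d ⟨0, by omega⟩ + d ⟨1, hn⟩ := by
  rw [← Comega_one_dotProduct (by omega) d]
  exact Comega_succ_dotProduct ⟨1, hn⟩ d

theorem Comega_dotProduct_Comega {t : ℕ} (ht : t ≤ n) (k : ℕ) :
    Comega n t ⬝ᵥ Comega n k = min t k := by
  induction t with
  | zero => simp [Comega_zero]
  | succ t ih =>
    have h := Comega_succ_dotProduct ⟨t, ht⟩ (Comega n k)
    simp only [Comega] at h ⊢
    rw [h, ih (by omega)]
    split_ifs <;> omega

theorem eq_of_Comega_succ_dotProduct_eq {a b : Fin n → ℤ}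
    (h : ∀ j : Fin n, Comega n (j + 1) ⬝ᵥ a = Comega n (j + 1) ⬝ᵥ b) : a = b := by
  have hpair : ∀ t (ht : t < n), Comega n t ⬝ᵥ a = Comega n t ⬝ᵥ b := by
    rintro (_ | t) ht
    · simp [Comega_zero]
    · exact h ⟨t, by omega⟩
  funext j
  have ha := Comega_succ_dotProduct j a
  have hb := Comega_succ_dotProduct j b
  rw [h j, hpair j j.isLt] at ha
  linarith

theorem Ccoroot_eq (i : Fin n) :
    Ccoroot n i = Pi.single i 1 - if h : i.val + 1 < n then Pi.single ⟨i + 1, h⟩ 1 else 0 := by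
  funext j
  have := j.isLt
  by_cases h : i.val + 1 < n
  · simp only [Ccoroot, dif_pos h, Pi.sub_apply, Pi.single_apply, Fin.ext_iff]
    split_ifs <;> omega
  · simp only [Ccoroot, dif_neg h, Pi.sub_apply, Pi.single_apply, Fin.ext_iff, Pi.zero_apply,
      sub_zero]
    split_ifs <;> omega

theorem Comega_succ_dotProduct_Ccoroot (j i : Fin n) :
    Comega n (j + 1) ⬝ᵥ Ccoroot n i = if i = j then 1 else 0 := by
  rw [Ccoroot_eq, dotProduct_sub, dotProduct_single, mul_one]
  split_ifs <;> simp only [Comega, dotProduct_single, dotProduct_zero] <;>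
    split_ifs <;> omega

theorem Comega_succ_dotProduct_sum_smul_Ccoroot (c : Fin n → ℤ) (j : Fin n) :
    Comega n (j + 1) ⬝ᵥ ∑ i, c i • Ccoroot n i = c j := by
  simp only [dotProduct_sum, dotProduct_smul, Comega_succ_dotProduct_Ccoroot, smul_eq_mul,
    mul_ite, mul_one, mul_zero, Finset.sum_ite_eq', Finset.mem_univ, if_true]

/-- In type `Cₙ` the vectors `Comega n t` are also the fundamental weights, the basis dual to the
simple coroots, so dominance is the comparison of partial sums. -/
theorem CdomLE_iff {lam mu : Fin n → ℤ} :
    CdomLE n lam mu ↔ ∀ t ≤ n, Comega n t ⬝ᵥ lam ≤ Comega n t ⬝ᵥ mu := by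
  constructor
  · rintro ⟨c, hc⟩ (_ | t) ht
    · simp [Comega_zero]
    · have h := Comega_succ_dotProduct_sum_smul_Ccoroot (fun i => (c i : ℤ)) ⟨t, ht⟩
      rw [← hc, dotProduct_sub] at h
      have : (0 : ℤ) ≤ c ⟨t, ht⟩ := Int.natCast_nonneg _
      simp only at h
      linarith
  · intro h
    refine ⟨fun i => (Comega n (i + 1) ⬝ᵥ (mu - lam)).toNat,
      eq_of_Comega_succ_dotProduct_eq fun j => ?_⟩
    rw [Comega_succ_dotProduct_sum_smul_Ccoroot, Int.toNat_of_nonneg]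
    rw [dotProduct_sub, sub_nonneg]
    exact h _ j.isLt

theorem Cdominant.exists_eq_Comega {ν : Fin n → ℤ} (hν : Cdominant n ν) (h : ∀ j, ν j ≤ 1) :
    ∃ k ≤ n, ν = Comega n k := by
  classical
  have hex : ∃ k, ∀ j : Fin n, k ≤ j.val → ν j = 0 := ⟨n, fun j hj => absurd j.isLt (by omega)⟩
  refine ⟨Nat.find hex, Nat.find_min' hex fun j hj => absurd j.isLt (by omega), funext fun j => ?_⟩
  by_cases hj : j.val < Nat.find hex
  · obtain ⟨i, hji, hi⟩ : ∃ i : Fin n, j.val ≤ i.val ∧ ν i ≠ 0 := by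
      simpa using Nat.find_min hex hj
    have := hν.1 (Fin.le_def.2 hji)
    have := hν.2 i
    have := h j
    simp only [Comega, hj, if_true]
    omega
  · simp [Comega, hj, Nat.find_spec hex j (not_lt.1 hj)]

theorem Cdominant.exists_eq_Comega_one_add {ν : Fin n → ℤ} (hν : Cdominant n ν) (hn : 1 < n)
    (h0 : ν ⟨0, by omega⟩ = 2) (h1 : ν ⟨1, hn⟩ ≤ 1) :
    ∃ k ≤ n, ν = Comega n 1 + Comega n k := by
  have htail : ∀ j : Fin n, 0 < j.val → ν j ≤ 1 := fun j hj =>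
    (hν.1 (show (⟨1, hn⟩ : Fin n) ≤ j from hj)).trans h1
  have hentry : ∀ j : Fin n, (ν - Comega n 1) j = if j.val = 0 then 1 else ν j := by
    intro j
    by_cases hj : j.val = 0
    · simp [Comega, show j = ⟨0, by omega⟩ from Fin.ext hj, h0]
    · simp [Comega, hj]
  have hdom : Cdominant n (ν - Comega n 1) := by
    refine ⟨fun i j hij => ?_, fun j => ?_⟩
    · have := hν.1 hij
      have := htail j
      rw [hentry, hentry]
      rw [Fin.le_def] at hij
      split_ifs <;> omega
    · have := hν.2 j
      rw [hentry]
      split_ifs <;> omega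
  obtain ⟨k, hk, hνk⟩ := hdom.exists_eq_Comega fun j => by
    have := htail j
    rw [hentry]
    split_ifs <;> omega
  exact ⟨k, hk, by rw [← hνk, add_sub_cancel]⟩

theorem CCover_Comega_pred {m : ℕ} (hm : 1 ≤ m) (hmn : m ≤ n) :
    CCover n (Comega n (m - 1)) (Comega n m) := by
  have hn : 0 < n := by omega
  refine ⟨CdomLE_iff.2 fun t ht => ?_, fun h => ?_, ?_⟩
  · simp only [Comega_dotProduct_Comega ht]
    omega
  · have := congrArg (Comega n n ⬝ᵥ ·) h
    simp only [Comega_dotProduct_Comega le_rfl] at this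
    omega
  rintro ⟨ν, hν, hlo, hhi, hne_lo, hne_hi⟩
  have hν0 : ν ⟨0, hn⟩ ≤ 1 := by
    have h := CdomLE_iff.1 hhi 1 hn
    rw [Comega_dotProduct_Comega hn, Comega_one_dotProduct hn] at h
    omega
  obtain ⟨k, hk, rfl⟩ := hν.exists_eq_Comega fun j =>
    (hν.1 (show (⟨0, hn⟩ : Fin n) ≤ j from Nat.zero_le _)).trans hν0
  have h1 := CdomLE_iff.1 hlo n le_rfl
  have h2 := CdomLE_iff.1 hhi n le_rfl
  simp only [Comega_dotProduct_Comega le_rfl] at h1 h2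
  obtain rfl | rfl : k = m - 1 ∨ k = m := by omega
  exacts [hne_lo rfl, hne_hi rfl]

theorem CCover_Comega_Comega_one_add {m : ℕ} (hm : 2 ≤ m) (hmn : m < n) :
    CCover n (Comega n m) (Comega n 1 + Comega n (m - 1)) := by
  have hpair : ∀ {t}, t ≤ n → ∀ k, Comega n t ⬝ᵥ (Comega n 1 + Comega n k) = min t 1 + min t k :=
    fun ht k => by rw [dotProduct_add, Comega_dotProduct_Comega ht, Comega_dotProduct_Comega ht]
  refine ⟨CdomLE_iff.2 fun t ht => ?_, fun h => ?_, ?_⟩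
  · rw [hpair ht, Comega_dotProduct_Comega ht]
    omega
  · have := congrArg (Comega n 1 ⬝ᵥ ·) h
    simp only [hpair (by omega : 1 ≤ n), Comega_dotProduct_Comega (by omega : 1 ≤ n)] at this
    omega
  rintro ⟨ν, hν, hlo, hhi, hne_lo, hne_hi⟩
  have hlo_n := CdomLE_iff.1 hlo n le_rfl
  have hhi_n := CdomLE_iff.1 hhi n le_rfl
  have hlo_1 := CdomLE_iff.1 hlo 1 (by omega)
  have hhi_1 := CdomLE_iff.1 hhi 1 (by omega)
  have hhi_2 := CdomLE_iff.1 hhi 2 (by omega)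
  rw [Comega_dotProduct_Comega le_rfl] at hlo_n
  rw [hpair le_rfl] at hhi_n
  rw [Comega_one_dotProduct (by omega) ν, Comega_dotProduct_Comega (by omega)] at hlo_1
  rw [Comega_one_dotProduct (by omega) ν, hpair (by omega)] at hhi_1
  rw [Comega_two_dotProduct (by omega) ν, hpair (by omega)] at hhi_2
  obtain hν0 | hν0 : ν ⟨0, by omega⟩ = 1 ∨ ν ⟨0, by omega⟩ = 2 := by omega
  · obtain ⟨k, hk, rfl⟩ := hν.exists_eq_Comega fun j =>
      (hν.1 (show (⟨0, by omega⟩ : Fin n) ≤ j from Nat.zero_le _)).trans hν0.le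
    rw [Comega_dotProduct_Comega le_rfl] at hlo_n hhi_n
    obtain rfl : k = m := by omega
    exact hne_lo rfl
  · obtain ⟨k, hk, rfl⟩ := hν.exists_eq_Comega_one_add (by omega) hν0 (by omega)
    rw [hpair le_rfl] at hlo_n hhi_n
    obtain rfl : k = m - 1 := by omega
    exact hne_hi rfl

end

/-- in type `Cₙ` (`n ≥ 2`) the chain
`0 < ω₁^∨ < ω₂^∨ < ⋯ < ω_{n-1}^∨ < 2ωₙ^∨ = (1,…,1)` consists of covering relations in
the dominance order, and `ωₘ^∨ < ω₁^∨ + ω_{m-1}^∨` is also a covering relation for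
`2 ≤ m ≤ n - 1`. -/
theorem stmt13 (n : ℕ) (hn : 2 ≤ n) :
    (∀ m : ℕ, 1 ≤ m → m ≤ n - 1 → CCover n (Comega n (m - 1)) (Comega n m)) ∧
    CCover n (Comega n (n - 1)) (fun _ => 1) ∧
    (∀ m : ℕ, 2 ≤ m → m ≤ n - 1 →
      CCover n (Comega n m) (Comega n 1 + Comega n (m - 1))) := by
  refine ⟨fun m hm hmn => CCover_Comega_pred hm (by omega), ?_,
    fun m hm hmn => CCover_Comega_Comega_one_add hm (by omega)⟩
  rw [← Comega_of_le le_rfl]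
  exact CCover_Comega_pred (by omega) le_rfl
end
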